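/- arXiv:1012.2679 — 3 statements merged into one kernel-verified Lean document; each statement's English description precedes it below -/
import Mathlib

section
/- There is no set of 9 distinct points in the real plane, not all collinear, such that every line passing through two of the points contains a third point of the set. Consequently, the Hesse configuration (9 points and 12 lines with every point on 4 of the lines and every line through 3 of the points) cannot be realized by real points. -/
noncomputable section SG

/-- Twice the signed area of the triangle `p q r`. -/
def XX (p q r : Fin 2 → ℝ) : ℝ :=
  (q 0 - p 0) * (r 1 - p 1) - (q 1 - p 1) * (r 0 - p 0)

/-- Squared Euclidean distance. -/
def ee (p q : Fin 2 → ℝ) : ℝ := (q 0 - p 0)^2 + (q 1 - p 1)^2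

/-- Inner product of `p - q` with `r - q`. -/
def dd (p q r : Fin 2 → ℝ) : ℝ :=
  (p 0 - q 0) * (r 0 - q 0) + (p 1 - q 1) * (r 1 - q 1)

lemma pt_ext {p q : Fin 2 → ℝ} (h0 : p 0 = q 0) (h1 : p 1 = q 1) : p = q := by
  funext i
  fin_cases i
  · simpa using h0
  · simpa using h1

lemma ee_pos_of_XX (p q r : Fin 2 → ℝ) (h : XX p q r ≠ 0) : 0 < ee q r := by
  rcases lt_or_ge 0 (ee q r) with h' | h'
  · exact h'
  · exfalso
    have h0 : r 0 - q 0 = 0 := by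
      unfold ee at h'; nlinarith [sq_nonneg (r 0 - q 0), sq_nonneg (r 1 - q 1)]
    have h1 : r 1 - q 1 = 0 := by
      unfold ee at h'; nlinarith [sq_nonneg (r 0 - q 0), sq_nonneg (r 1 - q 1)]
    exact h (by unfold XX; linear_combination (q 0 - p 0) * h1 - (q 1 - p 1) * h0)

lemma XX_ne_ne (p q r : Fin 2 → ℝ) (h : XX p q r ≠ 0) : q ≠ r := by
  intro hqr; subst hqr; exact h (by unfold XX; ring)

/-- Points with `XX p q x = 0` lie on the line through `p ≠ q`. -/
lemma line_param (p q x : Fin 2 → ℝ) (hpq : p ≠ q) (hX : XX p q x = 0) :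
    ∃ c : ℝ, x = c • (q - p) + p := by
  unfold XX at hX
  have hne : q 0 - p 0 ≠ 0 ∨ q 1 - p 1 ≠ 0 := by
    by_contra hc
    push_neg at hc
    exact hpq (pt_ext (by linarith [hc.1]) (by linarith [hc.2]))
  rcases hne with h0 | h1
  · refine ⟨(x 0 - p 0) / (q 0 - p 0), ?_⟩
    funext i; fin_cases i <;>
      simp only [Pi.smul_apply, Pi.add_apply, Pi.sub_apply, smul_eq_mul, Fin.zero_eta, Fin.mk_one]
    · field_simp; ring
    · field_simp
      linear_combination hX
  · refine ⟨(x 1 - p 1) / (q 1 - p 1), ?_⟩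
    funext i; fin_cases i <;>
      simp only [Pi.smul_apply, Pi.add_apply, Pi.sub_apply, smul_eq_mul, Fin.zero_eta, Fin.mk_one]
    · field_simp
      linear_combination -hX
    · field_simp; ring

lemma col_XX (p q r : Fin 2 → ℝ) (h : Collinear ℝ ({p, q, r} : Set (Fin 2 → ℝ))) :
    XX p q r = 0 := by
  rw [collinear_iff_of_mem (Set.mem_insert p _)] at h
  obtain ⟨v, hv⟩ := h
  obtain ⟨c, hc⟩ := hv q (by simp)
  obtain ⟨e, he⟩ := hv r (by simp)
  have hc0 := congrFun hc 0; have hc1 := congrFun hc 1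
  have he0 := congrFun he 0; have he1 := congrFun he 1
  simp only [Pi.add_apply, Pi.smul_apply, smul_eq_mul, vadd_eq_add] at hc0 hc1 he0 he1
  unfold XX
  rw [hc0, hc1, he0, he1]; ring

lemma pick (u x y z : ℝ) (hxy : x ≠ y) (hxz : x ≠ z) (hyz : y ≠ z) :
    ∃ α β : ℝ, (α = x ∨ α = y ∨ α = z) ∧ (β = x ∨ β = y ∨ β = z) ∧ α ≠ β ∧
      0 ≤ (α - u) * (β - u) ∧ (α - u)^2 ≤ (β - u)^2 := by
  have step : ∀ c d : ℝ, c ≠ d → (c = x ∨ c = y ∨ c = z) → (d = x ∨ d = y ∨ d = z) →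
      0 ≤ (c - u) * (d - u) →
      ∃ α β : ℝ, (α = x ∨ α = y ∨ α = z) ∧ (β = x ∨ β = y ∨ β = z) ∧ α ≠ β ∧
        0 ≤ (α - u) * (β - u) ∧ (α - u)^2 ≤ (β - u)^2 := by
    intro c d h1 h2 h3 h4
    rcases le_total ((c - u)^2) ((d - u)^2) with h | h
    · exact ⟨c, d, h2, h3, h1, h4, h⟩
    · exact ⟨d, c, h3, h2, h1.symm, by linarith [mul_comm (c - u) (d - u)], h⟩
  rcases le_or_gt 0 ((x - u) * (y - u)) with h | h
  · exact step x y hxy (Or.inl rfl) (Or.inr (Or.inl rfl)) h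
  rcases le_or_gt 0 ((x - u) * (z - u)) with h' | h'
  · exact step x z hxz (Or.inl rfl) (Or.inr (Or.inr rfl)) h'
  · refine step y z hyz (Or.inr (Or.inl rfl)) (Or.inr (Or.inr rfl)) ?_
    nlinarith [mul_pos_of_neg_of_neg h h', sq_nonneg (x - u)]

lemma key (p q r a b : Fin 2 → ℝ) (α β : ℝ)
    (ha0 : a 0 = q 0 + α * (r 0 - q 0)) (ha1 : a 1 = q 1 + α * (r 1 - q 1))
    (hb0 : b 0 = q 0 + β * (r 0 - q 0)) (hb1 : b 1 = q 1 + β * (r 1 - q 1))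
    (hX : XX p q r ≠ 0) (hab : α ≠ β)
    (hside : 0 ≤ (α * ee q r - dd p q r) * (β * ee q r - dd p q r))
    (horder : (α * ee q r - dd p q r)^2 ≤ (β * ee q r - dd p q r)^2) :
    XX a p b ≠ 0 ∧ XX a p b ^ 2 * ee q r < XX p q r ^ 2 * ee p b := by
  have hE : 0 < ee q r := ee_pos_of_XX p q r hX
  have I1 : XX a p b = (α - β) * XX p q r := by
    unfold XX; rw [ha0, ha1, hb0, hb1]; ring
  have I2 : ee p b * ee q r = (dd p q r - β * ee q r)^2 + XX p q r ^ 2 := by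
    unfold ee dd XX at *; rw [hb0, hb1]; ring
  have hX2 : 0 < XX p q r ^ 2 := by positivity
  refine ⟨by rw [I1]; exact mul_ne_zero (sub_ne_zero.2 hab) hX, ?_⟩
  have h3 : (α - β)^2 * ee q r * ee q r < ee p b * ee q r := by
    nlinarith [hside, horder, hX2, I2]
  have h4 : (α - β)^2 * ee q r < ee p b :=
    lt_of_mul_lt_mul_right h3 (le_of_lt hE)
  calc XX a p b ^ 2 * ee q r = XX p q r ^ 2 * ((α - β)^2 * ee q r) := by rw [I1]; ring
    _ < XX p q r ^ 2 * ee p b := by exact mul_lt_mul_of_pos_left h4 hX2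

/-- There is no set of 9 points in the real plane, not all collinear, such that every
line through two of the points contains a third one (no real Hesse configuration). -/
theorem stmt_9 (S : Finset (Fin 2 → ℝ)) (h9 : S.card = 9)
    (hnc : ¬ Collinear ℝ (S : Set (Fin 2 → ℝ))) :
    ¬ (∀ p ∈ S, ∀ q ∈ S, p ≠ q →
        ∃ r ∈ S, r ≠ p ∧ r ≠ q ∧ Collinear ℝ ({p, q, r} : Set (Fin 2 → ℝ))) := by
  intro h
  -- there is a noncollinear triple
  have hT : ∃ p ∈ S, ∃ q ∈ S, ∃ r ∈ S, XX p q r ≠ 0 := by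
    by_contra h'
    push_neg at h'
    apply hnc
    obtain ⟨p, hp, q, hq, hpq⟩ : ∃ p ∈ S, ∃ q ∈ S, p ≠ q := by
      apply Finset.one_lt_card.mp; omega
    rw [collinear_iff_of_mem (Finset.mem_coe.mpr hp)]
    refine ⟨q - p, fun x hx => ?_⟩
    obtain ⟨c, hc⟩ := line_param p q x hpq (h' p hp q hq x hx)
    exact ⟨c, by rw [hc]; rfl⟩
  -- minimize distance-to-line over noncollinear triples
  set T : Finset ((Fin 2 → ℝ) × (Fin 2 → ℝ) × (Fin 2 → ℝ)) :=
    (S ×ˢ S ×ˢ S).filter (fun w => XX w.1 w.2.1 w.2.2 ≠ 0) with hTdef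
  have hTne : T.Nonempty := by
    obtain ⟨p, hp, q, hq, r, hr, hX⟩ := hT
    exact ⟨(p, q, r), by simp [hTdef, Finset.mem_filter, Finset.mem_product, hp, hq, hr, hX]⟩
  obtain ⟨⟨p, q, r⟩, hmem, hmin⟩ :=
    T.exists_min_image (fun w => XX w.1 w.2.1 w.2.2 ^ 2 / ee w.2.1 w.2.2) hTne
  simp only [hTdef, Finset.mem_filter, Finset.mem_product] at hmem
  obtain ⟨⟨hp, hq, hr⟩, hX⟩ := hmem
  have hqr : q ≠ r := XX_ne_ne p q r hX
  have hE : 0 < ee q r := ee_pos_of_XX p q r hX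
  obtain ⟨s, hsS, hsq, hsr, hcol⟩ := h q hq r hr hqr
  obtain ⟨t, hst⟩ := line_param q r s hqr (col_XX q r s hcol)
  have hs0 : s 0 = q 0 + t * (r 0 - q 0) := by
    have := congrFun hst 0
    simp only [Pi.add_apply, Pi.smul_apply, Pi.sub_apply, smul_eq_mul] at this
    linarith
  have hs1 : s 1 = q 1 + t * (r 1 - q 1) := by
    have := congrFun hst 1
    simp only [Pi.add_apply, Pi.smul_apply, Pi.sub_apply, smul_eq_mul] at this
    linarith
  have ht0 : t ≠ 0 := by
    intro h0
    exact hsq (pt_ext (by rw [hs0, h0]; ring) (by rw [hs1, h0]; ring))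
  have ht1 : t ≠ 1 := by
    intro h1
    exact hsr (pt_ext (by rw [hs0, h1]; ring) (by rw [hs1, h1]; ring))
  obtain ⟨α, β, hα, hβ, hab, hside, horder⟩ :=
    pick (dd p q r / ee q r) 0 1 t (by norm_num) (Ne.symm ht0) (Ne.symm ht1)
  -- scale conditions by ee q r
  have hc : ∀ γ : ℝ, (γ - dd p q r / ee q r) * ee q r = γ * ee q r - dd p q r := by
    intro γ; field_simp
  have hside' : 0 ≤ (α * ee q r - dd p q r) * (β * ee q r - dd p q r) := by
    rw [← hc α, ← hc β]
    nlinarith [hside, sq_nonneg (ee q r)]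
  have horder' : (α * ee q r - dd p q r)^2 ≤ (β * ee q r - dd p q r)^2 := by
    rw [← hc α, ← hc β]
    nlinarith [horder, sq_nonneg (ee q r)]
  -- realize the parameters as points of S
  have exA : ∀ γ : ℝ, (γ = 0 ∨ γ = 1 ∨ γ = t) →
      ∃ c ∈ S, c 0 = q 0 + γ * (r 0 - q 0) ∧ c 1 = q 1 + γ * (r 1 - q 1) := by
    rintro γ (rfl | rfl | rfl)
    · exact ⟨q, hq, by ring, by ring⟩
    · exact ⟨r, hr, by ring, by ring⟩
    · exact ⟨s, hsS, hs0, hs1⟩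
  obtain ⟨a, haS, ha0, ha1⟩ := exA α hα
  obtain ⟨b, hbS, hb0, hb1⟩ := exA β hβ
  obtain ⟨hXab, hkey⟩ := key p q r a b α β ha0 ha1 hb0 hb1 hX hab hside' horder'
  have hEb : 0 < ee p b := ee_pos_of_XX a p b hXab
  have hmemT : (a, p, b) ∈ T := by
    simp [hTdef, Finset.mem_filter, Finset.mem_product, haS, hp, hbS, hXab]
  have hle := hmin (a, p, b) hmemT
  simp only at hle
  rw [div_le_div_iff₀ hE hEb] at hle
  linarith
end SG
end

section
/- Given 5 points in the projective plane over a field, there exists a nonzero homogeneous quadratic form vanishing at all 5 points. If moreover no 3 of the 5 points are collinear, this quadratic form is unique up to a nonzero scalar, i.e., the space of quadratic forms through the 5 points is one-dimensional. -/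
open MvPolynomial Matrix

noncomputable def s16e : Fin 6 → (Fin 3 →₀ ℕ) :=
  ![Finsupp.single 0 2, Finsupp.single 1 2, Finsupp.single 2 2,
    Finsupp.single 0 1 + Finsupp.single 1 1,
    Finsupp.single 0 1 + Finsupp.single 2 1,
    Finsupp.single 1 1 + Finsupp.single 2 1]

@[simp] lemma s16e0 : s16e 0 = Finsupp.single 0 2 := rfl
@[simp] lemma s16e1 : s16e 1 = Finsupp.single 1 2 := rfl
@[simp] lemma s16e2 : s16e 2 = Finsupp.single 2 2 := rfl
@[simp] lemma s16e3 : s16e 3 = Finsupp.single 0 1 + Finsupp.single 1 1 := rfl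
@[simp] lemma s16e4 : s16e 4 = Finsupp.single 0 1 + Finsupp.single 2 1 := rfl
@[simp] lemma s16e5 : s16e 5 = Finsupp.single 1 1 + Finsupp.single 2 1 := rfl

lemma s16deg3 (d : Fin 3 →₀ ℕ) : d.degree = d 0 + d 1 + d 2 := by
  rw [Finsupp.degree_apply, Finset.sum_subset (Finset.subset_univ _), Fin.sum_univ_three]
  intro i _ hi
  simpa using Finsupp.notMem_support_iff.mp hi

lemma s16e_degree (t : Fin 6) : (s16e t).degree = 2 := by
  fin_cases t <;> simp [s16deg3, Finsupp.single_apply]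

lemma s16e_inj : Function.Injective s16e := by
  intro s t h
  fin_cases s <;> fin_cases t <;> first
    | rfl
    | (exfalso
       have h0 := DFunLike.congr_fun h 0
       have h1 := DFunLike.congr_fun h 1
       have h2 := DFunLike.congr_fun h 2
       simp [Finsupp.single_apply] at h0 h1 h2)

lemma s16_classify (d : Fin 3 →₀ ℕ) (h : d.degree = 2) : ∃ t, d = s16e t := by
  rw [s16deg3] at h
  have h0 : d 0 = 0 ∨ d 0 = 1 ∨ d 0 = 2 := by omega
  have h1 : d 1 = 0 ∨ d 1 = 1 ∨ d 1 = 2 := by omega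
  have h2 : d 2 = 0 ∨ d 2 = 1 ∨ d 2 = 2 := by omega
  have key : ∀ t : Fin 6, d 0 = s16e t 0 → d 1 = s16e t 1 → d 2 = s16e t 2 → d = s16e t := by
    intro t e0 e1 e2
    ext i
    fin_cases i <;> assumption
  rcases h0 with h0 | h0 | h0 <;> rcases h1 with h1 | h1 | h1 <;> rcases h2 with h2 | h2 | h2 <;>
    first
    | omega
    | (refine ⟨0, key 0 ?_ ?_ ?_⟩ <;> (simp [Finsupp.single_apply, h0, h1, h2]; done))
    | (refine ⟨1, key 1 ?_ ?_ ?_⟩ <;> (simp [Finsupp.single_apply, h0, h1, h2]; done))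
    | (refine ⟨2, key 2 ?_ ?_ ?_⟩ <;> (simp [Finsupp.single_apply, h0, h1, h2]; done))
    | (refine ⟨3, key 3 ?_ ?_ ?_⟩ <;> (simp [Finsupp.single_apply, h0, h1, h2]; done))
    | (refine ⟨4, key 4 ?_ ?_ ?_⟩ <;> (simp [Finsupp.single_apply, h0, h1, h2]; done))
    | (refine ⟨5, key 5 ?_ ?_ ?_⟩ <;> (simp [Finsupp.single_apply, h0, h1, h2]; done))
open MvPolynomial Matrix

section s16aux

variable {K : Type*} [Field K]

noncomputable def s16P (K : Type*) [Field K] : (Fin 6 → K) →ₗ[K] MvPolynomial (Fin 3) K where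
  toFun a := ∑ t, MvPolynomial.monomial (s16e t) (a t)
  map_add' a b := by simp [map_add, Finset.sum_add_distrib]
  map_smul' c a := by simp [MvPolynomial.smul_monomial, Finset.smul_sum, smul_eq_mul]

lemma s16P_coeff (a : Fin 6 → K) (s : Fin 6) :
    MvPolynomial.coeff (s16e s) (s16P K a) = a s := by
  classical
  simp only [s16P, LinearMap.coe_mk, AddHom.coe_mk, MvPolynomial.coeff_sum,
    MvPolynomial.coeff_monomial]
  rw [Finset.sum_eq_single s (fun t _ ht => if_neg fun h => ht (s16e_inj h))
    (fun h => absurd (Finset.mem_univ s) h), if_pos rfl]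

lemma s16P_def (a : Fin 6 → K) :
    s16P K a = ∑ t, MvPolynomial.monomial (s16e t) (a t) := rfl

lemma s16P_hom (a : Fin 6 → K) : (s16P K a).IsHomogeneous 2 := by
  rw [s16P_def]
  exact MvPolynomial.IsHomogeneous.sum _ _ _
    (fun t _ => MvPolynomial.isHomogeneous_monomial _ (s16e_degree t))

lemma s16prod (d : Fin 3 →₀ ℕ) (x : Fin 3 → K) :
    (d.prod fun i k => x i ^ k) = x 0 ^ d 0 * x 1 ^ d 1 * x 2 ^ d 2 := by
  rw [Finsupp.prod_fintype _ _ (fun i => pow_zero _), Fin.prod_univ_three]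

lemma s16P_eval (a : Fin 6 → K) (x : Fin 3 → K) :
    MvPolynomial.eval x (s16P K a) =
      a 0 * x 0 ^ 2 + a 1 * x 1 ^ 2 + a 2 * x 2 ^ 2 +
      a 3 * (x 0 * x 1) + a 4 * (x 0 * x 2) + a 5 * (x 1 * x 2) := by
  rw [s16P_def, map_sum, Fin.sum_univ_six]
  simp only [MvPolynomial.eval_monomial, s16e0, s16e1, s16e2, s16e3, s16e4, s16e5, s16prod,
    Finsupp.single_apply, Finsupp.add_apply]
  simp only [Fin.reduceEq, if_true, if_false, reduceIte, pow_zero, pow_one, mul_one, one_mul]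
  ring

lemma s16P_repr {Q : MvPolynomial (Fin 3) K} (hQ : Q.IsHomogeneous 2) :
    s16P K (fun t => Q.coeff (s16e t)) = Q := by
  classical
  ext d
  by_cases hd : ∃ t, d = s16e t
  · obtain ⟨t, rfl⟩ := hd
    rw [s16P_coeff]
  · rw [show MvPolynomial.coeff d Q = 0 from
      hQ.coeff_eq_zero (fun hdeg => hd (s16_classify d hdeg))]
    simp only [s16P, LinearMap.coe_mk, AddHom.coe_mk, MvPolynomial.coeff_sum]
    exact Finset.sum_eq_zero fun t _ => by
      rw [MvPolynomial.coeff_monomial, if_neg fun h => hd ⟨t, h.symm⟩]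

lemma s16P_ne_zero {a : Fin 6 → K} (ha : a ≠ 0) : s16P K a ≠ 0 := by
  obtain ⟨s, hs⟩ := Function.ne_iff.mp ha
  intro h
  apply hs
  have := s16P_coeff a s
  rw [h] at this
  simpa using this.symm

noncomputable def s16phi (K : Type*) [Field K] (p : Fin 5 → Fin 3 → K) :
    (Fin 6 → K) →ₗ[K] (Fin 5 → K) where
  toFun a i := MvPolynomial.eval (p i) (s16P K a)
  map_add' a b := by funext i; simp [map_add]
  map_smul' c a := by funext i; simp [_root_.map_smul, MvPolynomial.smul_eval]

lemma s16phi_apply (p : Fin 5 → Fin 3 → K) (a : Fin 6 → K) (i : Fin 5) :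
    s16phi K p a i = MvPolynomial.eval (p i) (s16P K a) := rfl

end s16aux

lemma s16_dot_cross_ne_zero {K : Type*} [Field K] {w u v : Fin 3 → K}
    (h : LinearIndependent K ![w, u, v]) : w ⬝ᵥ (crossProduct u) v ≠ 0 := by
  rw [triple_product_eq_det]
  have hu : IsUnit (Matrix.of ![w, u, v]) :=
    Matrix.linearIndependent_rows_iff_isUnit.mp h
  have := (Matrix.isUnit_iff_isUnit_det _).mp hu
  exact this.ne_zero

/-- Through any 5 points of the projective plane there passes a conic (nonzero quadratic
form); if no three of the points are collinear, it is unique up to a nonzero scalar. -/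
theorem stmt_16 (K : Type*) [Field K] (p : Fin 5 → (Fin 3 → K)) (hne : ∀ i, p i ≠ 0) :
    (∃ Q : MvPolynomial (Fin 3) K, Q ≠ 0 ∧ Q.IsHomogeneous 2 ∧
      ∀ i, MvPolynomial.eval (p i) Q = 0) ∧
    ((∀ i j k : Fin 5, i ≠ j → j ≠ k → i ≠ k → LinearIndependent K ![p i, p j, p k]) →
      ∀ Q Q' : MvPolynomial (Fin 3) K,
        Q ≠ 0 → Q.IsHomogeneous 2 → (∀ i, MvPolynomial.eval (p i) Q = 0) →
        Q' ≠ 0 → Q'.IsHomogeneous 2 → (∀ i, MvPolynomial.eval (p i) Q' = 0) →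
        ∃ c : K, c ≠ 0 ∧ Q' = c • Q) := by
  classical
  constructor
  · -- existence
    have hninj : ¬ Function.Injective (s16phi K p) := by
      intro hinj
      have h6 := LinearMap.finrank_le_finrank_of_injective hinj
      rw [Module.finrank_fin_fun, Module.finrank_fin_fun] at h6
      omega
    have hker : LinearMap.ker (s16phi K p) ≠ ⊥ := by
      intro h
      exact hninj (LinearMap.ker_eq_bot.mp h)
    obtain ⟨a, hamem, ha0⟩ := Submodule.ne_bot_iff _ |>.mp hker
    refine ⟨s16P K a, s16P_ne_zero ha0, s16P_hom a, fun i => ?_⟩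
    have := LinearMap.mem_ker.mp hamem
    have := congrFun this i
    simpa [s16phi_apply] using this
  · -- uniqueness
    intro hgen Q Q' hQ0 hQh hQe hQ'0 hQ'h hQ'e
    -- surjectivity of the evaluation map
    have hsingle : ∀ i : Fin 5, Pi.single i (1 : K) ∈ LinearMap.range (s16phi K p) := by
      intro i
      set j := i.succAbove 0 with hj
      set k := i.succAbove 1 with hk
      set l := i.succAbove 2 with hl
      set m := i.succAbove 3 with hm
      set u : Fin 3 → K := (crossProduct (p j)) (p k) with hu
      set v : Fin 3 → K := (crossProduct (p l)) (p m) with hv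
      set b : Fin 6 → K := ![u 0 * v 0, u 1 * v 1, u 2 * v 2,
        u 0 * v 1 + u 1 * v 0, u 0 * v 2 + u 2 * v 0, u 1 * v 2 + u 2 * v 1] with hb
      have heval : ∀ x : Fin 3 → K,
          MvPolynomial.eval x (s16P K b) = (x ⬝ᵥ u) * (x ⬝ᵥ v) := by
        intro x
        rw [s16P_eval]
        have e0 : b 0 = u 0 * v 0 := rfl
        have e1 : b 1 = u 1 * v 1 := rfl
        have e2 : b 2 = u 2 * v 2 := rfl
        have e3 : b 3 = u 0 * v 1 + u 1 * v 0 := rfl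
        have e4 : b 4 = u 0 * v 2 + u 2 * v 0 := rfl
        have e5 : b 5 = u 1 * v 2 + u 2 * v 1 := rfl
        rw [e0, e1, e2, e3, e4, e5]
        simp only [dotProduct, Fin.sum_univ_three]
        ring
      have hci : (p i ⬝ᵥ u) * (p i ⬝ᵥ v) ≠ 0 := by
        apply mul_ne_zero
        · exact s16_dot_cross_ne_zero
            (hgen i j k (Fin.succAbove_ne i 0).symm
              (fun h => by simpa using Fin.succAbove_right_injective (p := i) h)
              (Fin.succAbove_ne i 1).symm)
        · exact s16_dot_cross_ne_zero
            (hgen i l m (Fin.succAbove_ne i 2).symm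
              (fun h => by simpa using Fin.succAbove_right_injective (p := i) h)
              (Fin.succAbove_ne i 3).symm)
      have hzero : ∀ i' : Fin 5, i' ≠ i → s16phi K p b i' = 0 := by
        intro i' hne'
        obtain ⟨t, rfl⟩ := Fin.exists_succAbove_eq hne'
        rw [s16phi_apply, heval]
        have h4 : i.succAbove t = j ∨ i.succAbove t = k ∨ i.succAbove t = l ∨
            i.succAbove t = m := by
          fin_cases t
          · exact Or.inl rfl
          · exact Or.inr (Or.inl rfl)
          · exact Or.inr (Or.inr (Or.inl rfl))
          · exact Or.inr (Or.inr (Or.inr rfl))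
        rcases h4 with h4 | h4 | h4 | h4 <;> rw [h4]
        · rw [show p j ⬝ᵥ u = 0 from dot_self_cross _ _, zero_mul]
        · rw [show p k ⬝ᵥ u = 0 from dot_cross_self _ _, zero_mul]
        · rw [show p l ⬝ᵥ v = 0 from dot_self_cross _ _, mul_zero]
        · rw [show p m ⬝ᵥ v = 0 from dot_cross_self _ _, mul_zero]
      refine ⟨((p i ⬝ᵥ u) * (p i ⬝ᵥ v))⁻¹ • b, ?_⟩
      rw [_root_.map_smul]
      funext i'
      by_cases hii : i' = i
      · subst hii
        simp only [Pi.smul_apply, s16phi_apply, heval, Pi.single_eq_same, smul_eq_mul]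
        exact inv_mul_cancel₀ hci
      · simp only [Pi.smul_apply, hzero i' hii, smul_eq_mul, mul_zero,
          Pi.single_eq_of_ne hii]
    have hrange : LinearMap.range (s16phi K p) = ⊤ := by
      rw [eq_top_iff]
      intro w _
      have hw : w = ∑ i, w i • (Pi.single i (1 : K) : Fin 5 → K) := by
        funext i'
        rw [Finset.sum_apply]
        simp [Pi.single_apply, Finset.sum_ite_eq]
      rw [hw]
      exact Submodule.sum_mem _ fun i _ => Submodule.smul_mem _ _ (hsingle i)
    have hkerdim : Module.finrank K (LinearMap.ker (s16phi K p)) = 1 := by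
      have h1 := LinearMap.finrank_range_add_finrank_ker (s16phi K p)
      rw [hrange, finrank_top, Module.finrank_fin_fun, Module.finrank_fin_fun] at h1
      omega
    set a : Fin 6 → K := fun t => Q.coeff (s16e t) with ha
    set a' : Fin 6 → K := fun t => Q'.coeff (s16e t) with ha'
    have haP : s16P K a = Q := s16P_repr hQh
    have haP' : s16P K a' = Q' := s16P_repr hQ'h
    have hamem : a ∈ LinearMap.ker (s16phi K p) := by
      rw [LinearMap.mem_ker]
      funext i
      rw [s16phi_apply, haP, hQe i]; rfl
    have hamem' : a' ∈ LinearMap.ker (s16phi K p) := by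
      rw [LinearMap.mem_ker]
      funext i
      rw [s16phi_apply, haP', hQ'e i]; rfl
    have ha0 : a ≠ 0 := by
      intro h
      apply hQ0
      rw [← haP, h, map_zero]
    have hva : (⟨a, hamem⟩ : LinearMap.ker (s16phi K p)) ≠ 0 := by
      intro h
      exact ha0 (by simpa using congrArg Subtype.val h)
    obtain ⟨c, hc⟩ := (finrank_eq_one_iff_of_nonzero' _ hva).mp hkerdim ⟨a', hamem'⟩
    have hc' : c • a = a' := congrArg Subtype.val hc
    have hcne : c ≠ 0 := by
      intro h
      apply hQ'0
      rw [← haP', ← hc', h, zero_smul, map_zero]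
    refine ⟨c, hcne, ?_⟩
    rw [← haP', ← hc', _root_.map_smul, haP]
end

section
/- Let eight points 1, …, 8 lie in convex position in the plane, in general position (no three collinear, no seven coconic). Then the number k of conics passing through exactly 6 of the eight points satisfies k ≤ 4. -/
open MvPolynomial Finsupp

noncomputable section ConicAux

/-- the six monomials of degree at most 2 in two variables -/
private def mons : Fin 6 → (Fin 2 →₀ ℕ)
  | 0 => 0
  | 1 => single 0 1
  | 2 => single 1 1
  | 3 => single 0 2
  | 4 => single 0 1 + single 1 1
  | 5 => single 1 2

/-- values of the six monomials at a point -/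
private def vmon (x : Fin 2 → ℝ) : Fin 6 → ℝ
  | 0 => 1
  | 1 => x 0
  | 2 => x 1
  | 3 => (x 0)^2
  | 4 => x 0 * x 1
  | 5 => (x 1)^2

/-- coefficient vector of a conic -/
private def cvec (Q : MvPolynomial (Fin 2) ℝ) : Fin 6 → ℝ := fun k => Q.coeff (mons k)

private lemma classify (d : Fin 2 →₀ ℕ) (h : d 0 + d 1 ≤ 2) : ∃ k : Fin 6, d = mons k := by
  have h0 : d 0 ≤ 2 := by omega
  have h1 : d 1 ≤ 2 := by omega
  have key : ∀ k : Fin 6, (mons k 0 = d 0 ∧ mons k 1 = d 1) → d = mons k := by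
    intro k hk
    ext i
    fin_cases i
    · exact hk.1.symm
    · exact hk.2.symm
  interval_cases hd0 : d 0 <;> interval_cases hd1 : d 1 <;> first
    | omega
    | (refine ⟨0, key 0 ?_⟩; simp [mons]; done)
    | (refine ⟨1, key 1 ?_⟩; simp [mons]; done)
    | (refine ⟨2, key 2 ?_⟩; simp [mons]; done)
    | (refine ⟨3, key 3 ?_⟩; simp [mons]; done)
    | (refine ⟨4, key 4 ?_⟩; simp [mons]; done)
    | (refine ⟨5, key 5 ?_⟩; simp [mons])

private lemma mons_injective : Function.Injective mons := by
  intro a b h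
  have h0 := DFunLike.congr_fun h (0 : Fin 2)
  have h1 := DFunLike.congr_fun h (1 : Fin 2)
  clear h
  fin_cases a <;> fin_cases b <;> simp_all [mons]

private lemma finsupp_sum_two (d : Fin 2 →₀ ℕ) : (d.sum fun _ e => e) = d 0 + d 1 := by
  rw [Finsupp.sum_fintype _ _ (fun _ => rfl), Fin.sum_univ_two]

private lemma prod_mons (x : Fin 2 → ℝ) (k : Fin 6) :
    (∏ i : Fin 2, x i ^ (mons k) i) = vmon x k := by
  rw [Fin.prod_univ_two]
  fin_cases k <;> simp [mons, vmon] <;> ring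

private lemma eval_cvec (Q : MvPolynomial (Fin 2) ℝ) (hQ : Q.totalDegree ≤ 2) (x : Fin 2 → ℝ) :
    eval x Q = ∑ k : Fin 6, cvec Q k * vmon x k := by
  have hsub : Q.support ⊆ Finset.univ.image mons := by
    intro d hd
    have hle := MvPolynomial.le_totalDegree hd
    rw [finsupp_sum_two] at hle
    obtain ⟨k, rfl⟩ := classify d (le_trans hle hQ)
    exact Finset.mem_image_of_mem _ (Finset.mem_univ k)
  have h1 : eval x Q
      = ∑ d ∈ Finset.univ.image mons, Q.coeff d * ∏ i : Fin 2, x i ^ d i := by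
    rw [MvPolynomial.eval_eq']
    refine Finset.sum_subset hsub ?_
    intro d _ hd
    rw [MvPolynomial.notMem_support_iff.mp hd, zero_mul]
  rw [h1, Finset.sum_image (fun a _ b _ h => mons_injective h)]
  exact Finset.sum_congr rfl fun k _ => by rw [prod_mons]; rfl

private lemma ext_of_cvec {Q1 Q2 : MvPolynomial (Fin 2) ℝ} (h1 : Q1.totalDegree ≤ 2)
    (h2 : Q2.totalDegree ≤ 2) (h : cvec Q1 = cvec Q2) : Q1 = Q2 := by
  ext d
  by_cases hd : d 0 + d 1 ≤ 2
  · obtain ⟨k, rfl⟩ := classify d hd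
    exact congrFun h k
  · have hz : ∀ Q : MvPolynomial (Fin 2) ℝ, Q.totalDegree ≤ 2 → Q.coeff d = 0 := by
      intro Q hQ
      apply MvPolynomial.coeff_eq_zero_of_totalDegree_lt
      have he : (∑ i ∈ d.support, d i) = d.sum fun _ e => e := rfl
      rw [he, finsupp_sum_two]
      omega
    rw [hz Q1 h1, hz Q2 h2]

private lemma cvec_zero : cvec 0 = 0 := by
  funext k; simp [cvec]

private lemma cvec_ne_zero {Q : MvPolynomial (Fin 2) ℝ} (hd : Q.totalDegree ≤ 2) (h : Q ≠ 0) :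
    cvec Q ≠ 0 := by
  intro hc
  exact h (ext_of_cvec hd (by simp) (by rw [hc, cvec_zero]))

/-- coefficients of the line through u and w -/
private def lin (u w : Fin 2 → ℝ) : Fin 3 → ℝ
  | 0 => (w 1 - u 1) * u 0 - (w 0 - u 0) * u 1
  | 1 => -(w 1 - u 1)
  | 2 => w 0 - u 0

private def aeval3 (α : Fin 3 → ℝ) (x : Fin 2 → ℝ) : ℝ := α 0 + α 1 * x 0 + α 2 * x 1

private lemma lin_self (u w : Fin 2 → ℝ) : aeval3 (lin u w) u = 0 := by
  simp [aeval3, lin]; ring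

private lemma lin_other (u w : Fin 2 → ℝ) : aeval3 (lin u w) w = 0 := by
  simp [aeval3, lin]; ring

private lemma collinear_of_lin_eq_zero {u w x : Fin 2 → ℝ} (h : aeval3 (lin u w) x = 0) :
    Collinear ℝ ({u, w, x} : Set (Fin 2 → ℝ)) := by
  by_cases huw : w = u
  · subst huw
    have he : ({w, w, x} : Set (Fin 2 → ℝ)) = {w, x} := by simp
    rw [he]
    exact collinear_pair ℝ w x
  · have cross : (w 0 - u 0) * (x 1 - u 1) - (w 1 - u 1) * (x 0 - u 0) = 0 := by
      simp only [aeval3, lin] at h; ring_nf; ring_nf at h; linarith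
    have hx : ∃ r : ℝ, x = r • (w - u) + u := by
      by_cases h0 : w 0 - u 0 ≠ 0
      · refine ⟨(x 0 - u 0) / (w 0 - u 0), ?_⟩
        funext i
        fin_cases i <;>
          simp only [Pi.add_apply, Pi.smul_apply, Pi.sub_apply, smul_eq_mul, Fin.zero_eta, Fin.mk_one] <;>
          field_simp
        · ring
        · linear_combination cross
      · push_neg at h0
        have h1 : w 1 - u 1 ≠ 0 := by
          intro h1
          apply huw
          funext i
          fin_cases i
          · simpa using by linarith
          · simpa using by linarith
        refine ⟨(x 1 - u 1) / (w 1 - u 1), ?_⟩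
        funext i
        fin_cases i <;>
          simp only [Pi.add_apply, Pi.smul_apply, Pi.sub_apply, smul_eq_mul, Fin.zero_eta, Fin.mk_one] <;>
          field_simp
        · linear_combination -cross
        · ring
    have hmem : u ∈ ({u, w, x} : Set (Fin 2 → ℝ)) := by simp
    rw [collinear_iff_of_mem hmem]
    refine ⟨w - u, ?_⟩
    intro z hz
    simp only [Set.mem_insert_iff, Set.mem_singleton_iff] at hz
    rcases hz with rfl | rfl | rfl
    · exact ⟨0, by simp⟩
    · exact ⟨1, by funext i; fin_cases i <;> simp⟩
    · obtain ⟨r, hr⟩ := hx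
      exact ⟨r, by simpa using hr⟩

/-- coefficient vector of the product of two affine-linear forms -/
private def prodCoeff (α β : Fin 3 → ℝ) : Fin 6 → ℝ
  | 0 => α 0 * β 0
  | 1 => α 0 * β 1 + α 1 * β 0
  | 2 => α 0 * β 2 + α 2 * β 0
  | 3 => α 1 * β 1
  | 4 => α 1 * β 2 + α 2 * β 1
  | 5 => α 2 * β 2

private lemma dot_prodCoeff (α β : Fin 3 → ℝ) (x : Fin 2 → ℝ) :
    (∑ k : Fin 6, vmon x k * prodCoeff α β k) = aeval3 α x * aeval3 β x := by
  rw [Fin.sum_univ_six]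
  simp only [prodCoeff, aeval3, vmon]
  ring

section Indep

variable {q : Fin 5 → (Fin 2 → ℝ)}
  (hq : ∀ i j k : Fin 5, i ≠ j → j ≠ k → i ≠ k →
    ¬ Collinear ℝ ({q i, q j, q k} : Set (Fin 2 → ℝ)))

include hq in
private lemma line_nz {a b j : Fin 5} (h1 : a ≠ b) (h2 : b ≠ j) (h3 : a ≠ j) :
    aeval3 (lin (q a) (q b)) (q j) ≠ 0 :=
  fun h => hq a b j h1 h2 h3 (collinear_of_lin_eq_zero h)

include hq in
private lemma rows_indep : LinearIndependent ℝ (fun i : Fin 5 => vmon (q i)) := by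
  rw [Fintype.linearIndependent_iff]
  intro g hg
  have key : ∀ c : Fin 6 → ℝ, (∑ i : Fin 5, g i * (∑ k : Fin 6, vmon (q i) k * c k)) = 0 := by
    intro c
    calc (∑ i : Fin 5, g i * (∑ k : Fin 6, vmon (q i) k * c k))
        = ∑ i : Fin 5, ∑ k : Fin 6, g i * vmon (q i) k * c k := by
          simp only [Finset.mul_sum, mul_assoc]
      _ = ∑ k : Fin 6, ∑ i : Fin 5, g i * vmon (q i) k * c k := Finset.sum_comm
      _ = ∑ k : Fin 6, (∑ i : Fin 5, g i • vmon (q i)) k * c k := by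
          refine Finset.sum_congr rfl fun k _ => ?_
          rw [Finset.sum_apply, Finset.sum_mul]
          simp
      _ = 0 := by rw [hg]; simp
  have main : ∀ (j a b c d : Fin 5),
      ({a, b, c, d, j} : Finset (Fin 5)) = Finset.univ →
      aeval3 (lin (q a) (q b)) (q j) ≠ 0 →
      aeval3 (lin (q c) (q d)) (q j) ≠ 0 →
      g j = 0 := by
    intro j a b c d huniv hnz1 hnz2
    have hzero : ∀ i : Fin 5, i ≠ j →
        aeval3 (lin (q a) (q b)) (q i) * aeval3 (lin (q c) (q d)) (q i) = 0 := by
      intro i hij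
      have hm : i ∈ ({a, b, c, d, j} : Finset (Fin 5)) := huniv ▸ Finset.mem_univ i
      simp only [Finset.mem_insert, Finset.mem_singleton] at hm
      rcases hm with rfl | rfl | rfl | rfl | rfl
      · rw [lin_self, zero_mul]
      · rw [lin_other, zero_mul]
      · rw [lin_self, mul_zero]
      · rw [lin_other, mul_zero]
      · exact absurd rfl hij
    have h := key (prodCoeff (lin (q a) (q b)) (lin (q c) (q d)))
    simp only [dot_prodCoeff] at h
    have h2 : ∑ i : Fin 5, g i * (aeval3 (lin (q a) (q b)) (q i) * aeval3 (lin (q c) (q d)) (q i))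
        = g j * (aeval3 (lin (q a) (q b)) (q j) * aeval3 (lin (q c) (q d)) (q j)) := by
      refine Finset.sum_eq_single j (fun i _ hij => by rw [hzero i hij, mul_zero]) (by simp)
    rw [h2] at h
    rcases mul_eq_zero.mp h with h' | h'
    · exact h'
    · exact absurd h' (mul_ne_zero hnz1 hnz2)
  intro j
  fin_cases j
  · exact main _ 1 2 3 4 (by decide) (line_nz hq (by decide) (by decide) (by decide))
      (line_nz hq (by decide) (by decide) (by decide))
  · exact main _ 0 2 3 4 (by decide) (line_nz hq (by decide) (by decide) (by decide))
      (line_nz hq (by decide) (by decide) (by decide))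
  · exact main _ 0 1 3 4 (by decide) (line_nz hq (by decide) (by decide) (by decide))
      (line_nz hq (by decide) (by decide) (by decide))
  · exact main _ 0 1 2 4 (by decide) (line_nz hq (by decide) (by decide) (by decide))
      (line_nz hq (by decide) (by decide) (by decide))
  · exact main _ 0 1 2 3 (by decide) (line_nz hq (by decide) (by decide) (by decide))
      (line_nz hq (by decide) (by decide) (by decide))

include hq in
/-- key lemma: a conic through 5 points in general position is unique up to scalar -/
private lemma conic_unique {Q1 Q2 : MvPolynomial (Fin 2) ℝ} (h1 : Q1 ≠ 0) (h2 : Q2 ≠ 0)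
    (hd1 : Q1.totalDegree ≤ 2) (hd2 : Q2.totalDegree ≤ 2)
    (hv1 : ∀ i, eval (q i) Q1 = 0) (hv2 : ∀ i, eval (q i) Q2 = 0) :
    ∃ a : ℝ, a ≠ 0 ∧ Q2 = a • Q1 := by
  classical
  set M : Matrix (Fin 5) (Fin 6) ℝ := Matrix.of (fun i k => vmon (q i) k) with hM
  -- the transpose has trivial kernel
  have hinj : Function.Injective M.transpose.mulVecLin := by
    rw [← LinearMap.ker_eq_bot, LinearMap.ker_eq_bot']
    intro a ha
    have hsum : (∑ i : Fin 5, a i • vmon (q i)) = 0 := by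
      funext k
      have h0 : M.transpose.mulVec a k = 0 := by
        rw [show M.transpose.mulVec a = 0 from ha]
        rfl
      rw [Finset.sum_apply]
      simp only [Pi.smul_apply, smul_eq_mul]
      rw [show (0 : Fin 6 → ℝ) k = 0 from rfl]
      rw [← h0]
      simp [Matrix.mulVec, dotProduct, hM, mul_comm]
    funext i
    exact Fintype.linearIndependent_iff.mp (rows_indep hq) a hsum i
  have hrankT : M.transpose.rank = 5 := by
    rw [Matrix.rank, LinearMap.finrank_range_of_inj hinj]
    simp [Module.finrank_pi]
  have hrank : M.rank = 5 := by rw [← Matrix.rank_transpose]; exact hrankT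
  have hker : Module.finrank ℝ (LinearMap.ker M.mulVecLin) = 1 := by
    have hrn := LinearMap.finrank_range_add_finrank_ker M.mulVecLin
    rw [Module.finrank_pi] at hrn
    have hr : Module.finrank ℝ (LinearMap.range M.mulVecLin) = 5 := hrank
    rw [hr] at hrn
    have h6 : (6 : ℕ) = Fintype.card (Fin 6) := by simp
    rw [← h6] at hrn
    exact Nat.add_left_cancel (by rw [hrn])
  -- both coefficient vectors are in the kernel
  have hmem : ∀ Q : MvPolynomial (Fin 2) ℝ, Q.totalDegree ≤ 2 → (∀ i, eval (q i) Q = 0) →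
      cvec Q ∈ LinearMap.ker M.mulVecLin := by
    intro Q hdQ hvQ
    rw [LinearMap.mem_ker]
    funext i
    have : M.mulVec (cvec Q) i = eval (q i) Q := by
      rw [eval_cvec Q hdQ]
      simp [Matrix.mulVec, dotProduct, hM, mul_comm]
    rw [show M.mulVecLin (cvec Q) = M.mulVec (cvec Q) from rfl, this, hvQ]
    rfl
  set K := LinearMap.ker M.mulVecLin
  have hx1 : cvec Q1 ∈ K := hmem Q1 hd1 hv1
  have hx2 : cvec Q2 ∈ K := hmem Q2 hd2 hv2
  have hc1 : cvec Q1 ≠ 0 := cvec_ne_zero hd1 h1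
  have hx1ne : (⟨cvec Q1, hx1⟩ : K) ≠ 0 := by
    intro h
    exact hc1 (congrArg Subtype.val h)
  have hspan : Submodule.span ℝ {(⟨cvec Q1, hx1⟩ : K)} = ⊤ :=
    (finrank_eq_one_iff_of_nonzero _ hx1ne).mp hker
  have hmem2 : (⟨cvec Q2, hx2⟩ : K) ∈ Submodule.span ℝ {(⟨cvec Q1, hx1⟩ : K)} := by
    rw [hspan]; trivial
  obtain ⟨a, ha⟩ := Submodule.mem_span_singleton.mp hmem2
  have hav : a • cvec Q1 = cvec Q2 := congrArg Subtype.val ha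
  have hane : a ≠ 0 := by
    rintro rfl
    apply cvec_ne_zero hd2 h2
    rw [← hav, zero_smul]
  refine ⟨a, hane, (ext_of_cvec hd2 (le_trans (totalDegree_smul_le a Q1) hd1) ?_)⟩
  funext k
  rw [show cvec Q2 k = (a • cvec Q1) k from (congrFun hav k).symm]
  simp [cvec, MvPolynomial.coeff_smul]

end Indep

end ConicAux

/-- Eight points in convex position in the real plane, in general position (no three
collinear, no seven coconic), lie on at most 4 conics each passing through exactly six
of the eight points. -/
theorem stmt_17 (p : Fin 8 → (Fin 2 → ℝ))
    (hconv : ∀ i, p i ∉ convexHull ℝ (p '' {j | j ≠ i}))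
    (hgen3 : ∀ i j k : Fin 8, i ≠ j → j ≠ k → i ≠ k →
      ¬ Collinear ℝ ({p i, p j, p k} : Set (Fin 2 → ℝ)))
    (hgen7 : ¬ ∃ s : Finset (Fin 8), s.card = 7 ∧
      ∃ Q : MvPolynomial (Fin 2) ℝ, Q ≠ 0 ∧ Q.totalDegree ≤ 2 ∧
        ∀ i ∈ s, MvPolynomial.eval (p i) Q = 0) :
    Nat.card {s : Finset (Fin 8) // s.card = 6 ∧
      ∃ Q : MvPolynomial (Fin 2) ℝ, Q ≠ 0 ∧ Q.totalDegree ≤ 2 ∧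
        (∀ i ∈ s, MvPolynomial.eval (p i) Q = 0) ∧
        (∀ i ∉ s, MvPolynomial.eval (p i) Q ≠ 0)} ≤ 4 := by
  classical
  set P : Finset (Fin 8) → Prop := fun s => s.card = 6 ∧
      ∃ Q : MvPolynomial (Fin 2) ℝ, Q ≠ 0 ∧ Q.totalDegree ≤ 2 ∧
        (∀ i ∈ s, MvPolynomial.eval (p i) Q = 0) ∧
        (∀ i ∉ s, MvPolynomial.eval (p i) Q ≠ 0) with hP
  have main : ∀ s t : Finset (Fin 8), P s → P t → s ≠ t → s ∪ t = Finset.univ := by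
    intro s t hs ht hst
    obtain ⟨hs6, Q1, hQ1ne, hQ1d, hQ1v, hQ1nv⟩ := hs
    obtain ⟨ht6, Q2, hQ2ne, hQ2d, hQ2v, _⟩ := ht
    by_contra hne
    have hcap : 5 ≤ (s ∩ t).card := by
      have h8 : (s ∪ t).card ≤ 8 := by
        simpa using Finset.card_le_univ (s ∪ t)
      have hlt : (s ∪ t).card < 8 := by
        rcases lt_or_eq_of_le h8 with h | h
        · exact h
        · exact absurd (Finset.eq_univ_of_card _ (by simpa using h)) hne
      have := Finset.card_union_add_card_inter s t
      omega
    obtain ⟨u, husub, hu5⟩ := Finset.exists_subset_card_eq hcap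
    set e := u.orderIsoOfFin hu5 with he
    set q : Fin 5 → (Fin 2 → ℝ) := fun i => p (e i) with hqdef
    have hq : ∀ i j k : Fin 5, i ≠ j → j ≠ k → i ≠ k →
        ¬ Collinear ℝ ({q i, q j, q k} : Set (Fin 2 → ℝ)) := by
      intro i j k hij hjk hik
      exact hgen3 (e i) (e j) (e k)
        (fun h => hij (e.injective (Subtype.coe_injective h)))
        (fun h => hjk (e.injective (Subtype.coe_injective h)))
        (fun h => hik (e.injective (Subtype.coe_injective h)))
    have hmem : ∀ i : Fin 5, (e i : Fin 8) ∈ s ∩ t := fun i => husub (e i).2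
    have hv1 : ∀ i, MvPolynomial.eval (q i) Q1 = 0 :=
      fun i => hQ1v _ (Finset.mem_of_mem_inter_left (hmem i))
    have hv2 : ∀ i, MvPolynomial.eval (q i) Q2 = 0 :=
      fun i => hQ2v _ (Finset.mem_of_mem_inter_right (hmem i))
    obtain ⟨a, hane, hQ2eq⟩ := conic_unique hq hQ1ne hQ2ne hQ1d hQ2d hv1 hv2
    have hex : ∃ i, i ∈ t ∧ i ∉ s := by
      by_contra h
      push_neg at h
      exact hst (Finset.eq_of_subset_of_card_le (fun i hi => h i hi) (by omega)).symm
    obtain ⟨i, hit, his⟩ := hex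
    have h0 : MvPolynomial.eval (p i) Q2 = 0 := hQ2v i hit
    rw [hQ2eq, MvPolynomial.smul_eq_C_mul, map_mul, MvPolynomial.eval_C] at h0
    exact hQ1nv i his ((mul_eq_zero.mp h0).resolve_left hane)
  set F := Finset.univ.filter P with hF
  have hcardeq : Nat.card {s : Finset (Fin 8) // P s} = F.card := by
    rw [Nat.card_eq_fintype_card, Fintype.card_subtype]
  rw [show Nat.card {s : Finset (Fin 8) // s.card = 6 ∧
      ∃ Q : MvPolynomial (Fin 2) ℝ, Q ≠ 0 ∧ Q.totalDegree ≤ 2 ∧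
        (∀ i ∈ s, MvPolynomial.eval (p i) Q = 0) ∧
        (∀ i ∉ s, MvPolynomial.eval (p i) Q ≠ 0)}
    = Nat.card {s : Finset (Fin 8) // P s} from rfl, hcardeq]
  have hdisj : ∀ s ∈ F, ∀ t ∈ F, s ≠ t → Disjoint sᶜ tᶜ := by
    intro s hsF t htF hst
    have hs := (Finset.mem_filter.mp hsF).2
    have ht := (Finset.mem_filter.mp htF).2
    rw [_root_.disjoint_iff, ← compl_sup]
    rw [show s ⊔ t = s ∪ t from rfl, main s t hs ht hst]
    simp
  have hbi := Finset.card_biUnion hdisj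
  have hsum : (∑ s ∈ F, (sᶜ : Finset (Fin 8)).card) = 2 * F.card := by
    rw [Finset.sum_congr rfl (fun s hsF => ?_), Finset.sum_const, smul_eq_mul, mul_comm]
    have hs6 := ((Finset.mem_filter.mp hsF).2).1
    rw [Finset.card_compl, hs6]
    simp
  have hle : (F.biUnion fun s => sᶜ).card ≤ 8 := by
    simpa using Finset.card_le_univ (F.biUnion fun s => sᶜ)
  rw [hbi, hsum] at hle
  omega
end
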